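/- arXiv:2601.21236 — 4 statements merged into one kernel-verified Lean document; each statement's English description precedes it below -/
import Mathlib

section
/- (Fine–Wilf) Let f, g : ℕ → Σ be sequences over an alphabet Σ such that f has period T1 (i.e., f(i) = f(i+T1) for all i) and g has period T2. If f(i) = g(i) for T1 + T2 - gcd(T1,T2) consecutive indices i starting from 0, then f(i) = g(i) for all i in ℕ. -/
/-- If `w` has period `t` on `[0, n)`, then every `i < n` equals its reduction mod `t`. -/
lemma fw_reduce_mod {α : Type*} (w : ℕ → α) (t n : ℕ) (ht : 0 < t)
    (hp : ∀ i, i + t < n → w i = w (i + t)) : ∀ i < n, w i = w (i % t) := by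
  intro i
  induction i using Nat.strong_induction_on with
  | _ i ih =>
    intro hin
    rcases lt_or_ge i t with h | h
    · rw [Nat.mod_eq_of_lt h]
    · have h1 : w (i - t) = w (i - t + t) := hp (i - t) (by omega)
      rw [Nat.sub_add_cancel h] at h1
      rw [← h1, Nat.mod_eq_sub_mod h]
      exact ih (i - t) (by omega) (by omega)

/-- Fine–Wilf for finite windows: two periods `p`, `q` on a window of length at least
`p + q - gcd p q` force period `gcd p q` (in the strong form of reduction mod the gcd). -/
lemma fw_main : ∀ (s p q n : ℕ) (α : Type*) (w : ℕ → α), p + q ≤ s → 0 < p → 0 < q →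
    (∀ i, i + p < n → w i = w (i + p)) → (∀ i, i + q < n → w i = w (i + q)) →
    p + q - Nat.gcd p q ≤ n → ∀ i < n, w i = w (i % Nat.gcd p q) := by
  intro s
  induction s with
  | zero => intro p q n α w hs hp0 hq0; omega
  | succ s ih =>
    intro p q n α w hs hp0 hq0 hp hq hn i hin
    have hdp : Nat.gcd p q ∣ p := Nat.gcd_dvd_left p q
    have hdq : Nat.gcd p q ∣ q := Nat.gcd_dvd_right p q
    have hdpos : 0 < Nat.gcd p q := Nat.gcd_pos_of_pos_left q hp0
    rcases lt_trichotomy p q with hlt | heq | hgt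
    · -- p < q : recurse on (p, q - p)
      have hdle : Nat.gcd p q ≤ q - p := Nat.le_of_dvd (by omega) (Nat.dvd_sub hdq hdp)
      have hper : ∀ j, j + (q - p) < n - p → w j = w (j + (q - p)) := by
        intro j hj
        have h1 : w j = w (j + q) := hq j (by omega)
        have h2 : w (j + (q - p)) = w (j + (q - p) + p) := hp _ (by omega)
        have h3 : j + (q - p) + p = j + q := by omega
        rw [h3] at h2
        rw [h1, h2]
      have hperp : ∀ j, j + p < n - p → w j = w (j + p) := fun j hj => hp j (by omega)
      have hg : Nat.gcd p (q - p) = Nat.gcd p q := Nat.gcd_sub_self_right (le_of_lt hlt)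
      have hih := ih p (q - p) (n - p) α w (by omega) hp0 (by omega) hperp hper
        (by rw [hg]; omega)
      rw [hg] at hih
      have h1 : w i = w (i % p) := fw_reduce_mod w p n hp0 hp i hin
      have hmp : i % p < p := Nat.mod_lt i hp0
      have h2 : w (i % p) = w ((i % p) % Nat.gcd p q) := hih (i % p) (by omega)
      rw [h1, h2, Nat.mod_mod_of_dvd i hdp]
    · -- p = q
      subst heq
      rw [Nat.gcd_self]
      exact fw_reduce_mod w p n hp0 hp i hin
    · -- q < p : recurse on (q, p - q)
      have hdle : Nat.gcd p q ≤ p - q := Nat.le_of_dvd (by omega) (Nat.dvd_sub hdp hdq)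
      have hper : ∀ j, j + (p - q) < n - q → w j = w (j + (p - q)) := by
        intro j hj
        have h1 : w j = w (j + p) := hp j (by omega)
        have h2 : w (j + (p - q)) = w (j + (p - q) + q) := hq _ (by omega)
        have h3 : j + (p - q) + q = j + p := by omega
        rw [h3] at h2
        rw [h1, h2]
      have hperq : ∀ j, j + q < n - q → w j = w (j + q) := fun j hj => hq j (by omega)
      have hg : Nat.gcd q (p - q) = Nat.gcd p q := by
        rw [Nat.gcd_sub_self_right (le_of_lt hgt), Nat.gcd_comm]
      have hih := ih q (p - q) (n - q) α w (by omega) hq0 (by omega) hperq hper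
        (by rw [hg]; omega)
      rw [hg] at hih
      have h1 : w i = w (i % q) := fw_reduce_mod w q n hq0 hq i hin
      have hmq : i % q < q := Nat.mod_lt i hq0
      have h2 : w (i % q) = w ((i % q) % Nat.gcd p q) := hih (i % q) (by omega)
      rw [h1, h2, Nat.mod_mod_of_dvd i hdq]

/-- Fine–Wilf theorem for bi-infinite (one-sided) sequences. -/
theorem stmt_1 {α : Type*} (f g : ℕ → α) (T1 T2 : ℕ) (hT1 : 0 < T1) (hT2 : 0 < T2)
    (hf : ∀ i, f i = f (i + T1)) (hg : ∀ i, g i = g (i + T2))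
    (hagree : ∀ i < T1 + T2 - Nat.gcd T1 T2, f i = g i) :
    ∀ i, f i = g i := by
  intro i
  have hdT1 : Nat.gcd T1 T2 ∣ T1 := Nat.gcd_dvd_left T1 T2
  have hdT2 : Nat.gcd T1 T2 ∣ T2 := Nat.gcd_dvd_right T1 T2
  have hdle1 : Nat.gcd T1 T2 ≤ T1 := Nat.le_of_dvd hT1 hdT1
  have hdle2 : Nat.gcd T1 T2 ≤ T2 := Nat.le_of_dvd hT2 hdT2
  set L := T1 + T2 - Nat.gcd T1 T2 with hL
  -- f has period T2 on the window [0, L)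
  have hfT2 : ∀ j, j + T2 < L → f j = f (j + T2) := by
    intro j hj
    rw [hagree j (by omega), hagree (j + T2) (by omega)]
    exact hg j
  have hfL := fw_main (T1 + T2) T1 T2 L α f le_rfl hT1 hT2 (fun j _ => hf j) hfT2 le_rfl
  have rf : f i = f (i % T1) :=
    fw_reduce_mod f T1 (i + 1) hT1 (fun j _ => hf j) i (by omega)
  have rg : g i = g (i % T2) :=
    fw_reduce_mod g T2 (i + 1) hT2 (fun j _ => hg j) i (by omega)
  have hm1 : i % T1 < T1 := Nat.mod_lt i hT1
  have hm2 : i % T2 < T2 := Nat.mod_lt i hT2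
  have e1 : f (i % T1) = f ((i % T1) % Nat.gcd T1 T2) := hfL (i % T1) (by omega)
  have e2 : f (i % T2) = f ((i % T2) % Nat.gcd T1 T2) := hfL (i % T2) (by omega)
  have e3 : g (i % T2) = f (i % T2) := (hagree (i % T2) (by omega)).symm
  rw [rf, rg, e3, e1, e2, Nat.mod_mod_of_dvd i hdT1, Nat.mod_mod_of_dvd i hdT2]
end

section
/- If a finite string of length at least T1 + T2 - gcd(T1, T2) has both period T1 and period T2, then it also has period gcd(T1, T2). -/
/-- A string `(s 0, …, s (N-1))` has period `T` if `1 ≤ T ≤ N - 1` and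
`s i = s (i + T)` whenever both indices are in range. -/
def HasPeriod {α : Type*} (s : ℕ → α) (N T : ℕ) : Prop :=
  0 < T ∧ T ≤ N - 1 ∧ ∀ i, i + T < N → s i = s (i + T)

private lemma chain_steps {α : Type*} (s : ℕ → α) (d L : ℕ)
    (h : ∀ j, j + d < L → s j = s (j + d)) :
    ∀ m a, a + m * d < L → s a = s (a + m * d) := by
  intro m
  induction m with
  | zero => simp
  | succ m ih =>
    intro a ha
    have hm : (m + 1) * d = m * d + d := by ring
    have h1 : a + d < L := by omega
    have h2 := ih (a + d) (by omega)
    have he : a + d + m * d = a + (m + 1) * d := by omega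
    rw [he] at h2
    exact (h a h1).trans h2

private lemma fw {α : Type*} (s : ℕ → α) (N T1 T2 : ℕ)
    (hle : T2 ≤ T1) (hpos : 0 < T2)
    (p1 : ∀ i, i + T1 < N → s i = s (i + T1))
    (p2 : ∀ i, i + T2 < N → s i = s (i + T2))
    (hN : T1 + T2 - Nat.gcd T1 T2 ≤ N) :
    ∀ k, k + Nat.gcd T1 T2 < N → s k = s (k + Nat.gcd T1 T2) := by
  rcases eq_or_lt_of_le hle with heq | hlt
  · subst heq
    rw [Nat.gcd_self]
    exact p2
  · -- T2 < T1
    set d := Nat.gcd T1 T2 with hd_def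
    set t := T1 - T2 with ht_def
    have ht : t + T2 = T1 := by omega
    have hgcd : Nat.gcd t T2 = d := Nat.gcd_sub_self_left hle
    have hdT1 : d ∣ T1 := Nat.gcd_dvd_left _ _
    have hdT2 : d ∣ T2 := Nat.gcd_dvd_right _ _
    have hdt : d ∣ t := (Nat.dvd_sub hdT1 hdT2)
    have hdT2' : d ≤ T2 := Nat.le_of_dvd hpos hdT2
    have hdt' : d ≤ t := Nat.le_of_dvd (by omega) hdt
    -- period t on [0, N - T2)
    have pt : ∀ i, i + t < N - T2 → s i = s (i + t) := by
      intro i hi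
      have e1 := p1 i (by omega)
      have e2 := p2 (i + t) (by omega)
      have he : i + t + T2 = i + T1 := by omega
      rw [he] at e2
      exact e1.trans e2.symm
    have pT2 : ∀ i, i + T2 < N - T2 → s i = s (i + T2) := fun i hi => p2 i (by omega)
    -- inductive hypothesis: period d on [0, N - T2)
    have hd : ∀ k, k + d < N - T2 → s k = s (k + d) := by
      rcases le_total t T2 with hc | hc
      · have := fw s (N - T2) T2 t hc (by omega) pT2 pt
          (by rw [Nat.gcd_comm, hgcd]; omega)
        rwa [Nat.gcd_comm, hgcd] at this
      · have := fw s (N - T2) t T2 hc hpos pt pT2 (by rw [hgcd]; omega)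
        rwa [hgcd] at this
    intro k hk
    rcases le_or_gt T2 k with hkT2 | hkT2
    · -- k ≥ T2: shift down by T2
      have e1 := p2 (k - T2) (by omega)
      have e1' : s (k - T2) = s k := by
        have he : k - T2 + T2 = k := by omega
        rw [he] at e1; exact e1
      have e2 := hd (k - T2) (by omega)
      have e3 := p2 (k - T2 + d) (by omega)
      have he : k - T2 + d + T2 = k + d := by omega
      rw [he] at e3
      exact e1'.symm.trans (e2.trans e3)
    · rcases lt_or_ge (k + d) (N - T2) with hc | hc
      · exact hd k hc
      · -- gap case
        have hkd : T2 ≤ k + d := by omega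
        have e1 := p2 (k + d - T2) (by omega)
        have he : k + d - T2 + T2 = k + d := by omega
        rw [he] at e1
        obtain ⟨m, hm⟩ : d ∣ (T2 - d) := Nat.dvd_sub hdT2 dvd_rfl
        have hmd : m * d = T2 - d := by rw [Nat.mul_comm]; exact hm.symm
        have hc2 := chain_steps s d (N - T2) hd m (k + d - T2) (by omega)
        have he2 : k + d - T2 + m * d = k := by omega
        rw [he2] at hc2
        exact hc2.symm.trans e1
termination_by T1 + T2
decreasing_by all_goals omega

theorem stmt_3 {α : Type*} (s : ℕ → α) (N T1 T2 : ℕ)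
    (h1 : HasPeriod s N T1) (h2 : HasPeriod s N T2)
    (hN : T1 + T2 - Nat.gcd T1 T2 ≤ N) :
    HasPeriod s N (Nat.gcd T1 T2) := by
  obtain ⟨h1p, h1le, h1per⟩ := h1
  obtain ⟨h2p, h2le, h2per⟩ := h2
  refine ⟨Nat.gcd_pos_of_pos_left _ h1p, ?_, ?_⟩
  · exact le_trans (Nat.le_of_dvd h1p (Nat.gcd_dvd_left _ _)) h1le
  · rcases le_total T2 T1 with h | h
    · exact fw s N T1 T2 h h2p h1per h2per hN
    · have := fw s N T2 T1 h h1p h2per h1per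
        (by rw [Nat.gcd_comm]; omega)
      rwa [Nat.gcd_comm] at this
end

section
/- For a string x = (x_1,…,x_n) over an alphabet of size q with symbols i.i.d. uniform, the indicator random variables I_i (that a maximal constant run of length at least ℓ starts at position i) satisfy: I_i and I_j are independent whenever |i - j| ≥ ℓ. -/
open scoped Classical

/-- A maximal constant run of length at least `ℓ` starts at (0-indexed) position `i`
of the string `x` of length `n`. -/
def runStart (q ℓ n : ℕ) (x : Fin n → Fin q) (i : ℕ) : Prop :=
  ∃ hi : i < n, i + ℓ ≤ n ∧
    (∀ j : Fin n, i ≤ (j : ℕ) → (j : ℕ) < i + ℓ → x j = x ⟨i, hi⟩) ∧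
    (∀ j : Fin n, (j : ℕ) + 1 = i → x j ≠ x ⟨i, hi⟩)

set_option linter.unusedVariables false
set_option linter.unnecessarySeqFocus false
set_option linter.unreachableTactic false
set_option linter.unusedTactic false

def W (q ℓ n : ℕ) (i : ℕ) (a : Fin q) (k : Fin n) : Finset (Fin q) :=
  (if i ≤ (k : ℕ) ∧ (k : ℕ) < i + ℓ then {a} else Finset.univ)
    ∩ (if (k : ℕ) + 1 = i then {a}ᶜ else Finset.univ)

def gS (q ℓ i : ℕ) (k : ℕ) : ℕ :=
  if i ≤ k ∧ k < i + ℓ then 1 else if k + 1 = i then q - 1 else q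

def gJ (q ℓ i j : ℕ) (e : Prop) [Decidable e] (k : ℕ) : ℕ :=
  if i ≤ k ∧ k < i + ℓ then (if k + 1 = j then (if e then 0 else 1) else 1)
  else if j ≤ k ∧ k < j + ℓ then 1
  else if k + 1 = i then q - 1
  else if k + 1 = j then q - 1
  else q

lemma card_filter_pointwise {q n : ℕ} (P : (Fin n → Fin q) → Prop) [DecidablePred P]
    (S : Fin n → Finset (Fin q)) (h : ∀ x, P x ↔ ∀ k, x k ∈ S k) :
    (Finset.univ.filter P).card = ∏ k : Fin n, (S k).card := by
  calc (Finset.univ.filter P).card = Fintype.card {x // P x} := (Fintype.card_subtype P).symm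
    _ = Fintype.card (∀ k : Fin n, {b : Fin q // b ∈ S k}) :=
        Fintype.card_congr ((Equiv.subtypeEquivRight h).trans (Equiv.subtypePiEquivPi))
    _ = ∏ k : Fin n, (S k).card := by simp [Fintype.card_pi]

lemma card_filter_fiber {q n : ℕ} (P : (Fin n → Fin q) → Prop) [DecidablePred P] (i' : Fin n) :
    (Finset.univ.filter P).card
      = ∑ a : Fin q, (Finset.univ.filter fun x => P x ∧ x i' = a).card := by
  rw [Finset.card_eq_sum_card_fiberwise (f := fun x => x i') (t := Finset.univ)
    (fun _ _ => Finset.mem_univ _)]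
  exact Finset.sum_congr rfl fun a _ => by rw [Finset.filter_filter]

lemma prod_Ico_const (f : ℕ → ℕ) (c a b : ℕ) (h : ∀ k, a ≤ k → k < b → f k = c) :
    ∏ k ∈ Finset.Ico a b, f k = c ^ (b - a) := by
  rw [← Nat.card_Ico a b, ← Finset.prod_const]
  exact Finset.prod_congr rfl fun k hk => by
    rw [Finset.mem_Ico] at hk; exact h k hk.1 hk.2

lemma split_prod (f : ℕ → ℕ) (a b c : ℕ) (hab : a ≤ b) (hbc : b ≤ c) :
    ∏ k ∈ Finset.Ico a c, f k = (∏ k ∈ Finset.Ico a b, f k) * ∏ k ∈ Finset.Ico b c, f k :=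
  (Finset.prod_Ico_consecutive f hab hbc).symm

lemma sum_ite_ne {q : ℕ} (a : Fin q) (C : ℕ) :
    ∑ b : Fin q, (if a = b then 0 else C) = (q - 1) * C := by
  rw [← Finset.add_sum_erase _ _ (Finset.mem_univ a), if_pos rfl, zero_add,
    Finset.sum_congr rfl (fun b hb => if_neg (Finset.ne_of_mem_erase hb).symm),
    Finset.sum_const, Finset.card_erase_of_mem (Finset.mem_univ a), Finset.card_univ,
    Fintype.card_fin, smul_eq_mul]

lemma singleton_inter_compl {q : ℕ} (a b : Fin q) :
    ({a} : Finset (Fin q)) ∩ {b}ᶜ = if a = b then ∅ else {a} := by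
  split_ifs with h
  · subst h; ext c; simp
  · ext c; simp; rintro rfl; exact h

lemma card_W {q ℓ n : ℕ} (i : ℕ) (a : Fin q) (k : Fin n) :
    (W q ℓ n i a k).card = gS q ℓ i (k : ℕ) := by
  unfold W gS
  split_ifs with h1 h2 h2 <;>
    simp [Finset.card_compl, Fintype.card_fin] <;> omega

lemma mem_W {q ℓ n : ℕ} {i : ℕ} {a c : Fin q} {k : Fin n} :
    c ∈ W q ℓ n i a k ↔
      (i ≤ (k : ℕ) → (k : ℕ) < i + ℓ → c = a) ∧ ((k : ℕ) + 1 = i → c ≠ a) := by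
  unfold W
  split_ifs with h1 h2 h2 <;> simp_all <;> tauto

lemma runStart_iff {q ℓ n : ℕ} (hℓ : 1 ≤ ℓ) {i : ℕ} (hin : i + ℓ ≤ n) (hi : i < n) (a : Fin q)
    (x : Fin n → Fin q) :
    (runStart q ℓ n x i ∧ x ⟨i, hi⟩ = a) ↔ ∀ k, x k ∈ W q ℓ n i a k := by
  constructor
  · rintro ⟨⟨hi', hle, hrun, hpred⟩, hxa⟩ k
    rw [mem_W]
    exact ⟨fun h1 h2 => by rw [hrun k h1 h2]; exact hxa,
      fun h1 => by rw [← hxa] at *; exact hpred k h1⟩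
  · intro h
    have hxa : x ⟨i, hi⟩ = a := ((mem_W.mp (h ⟨i, hi⟩)).1 (le_refl _) (by simp; omega))
    refine ⟨⟨hi, hin, fun j h1 h2 => ?_, fun j h1 => ?_⟩, hxa⟩
    · rw [hxa]; exact (mem_W.mp (h j)).1 h1 h2
    · rw [hxa]; exact (mem_W.mp (h j)).2 h1

lemma card_WW {q ℓ n : ℕ} {i j : ℕ} (hℓ : 1 ≤ ℓ) (hij : i + ℓ ≤ j) (a b : Fin q) (k : Fin n) :
    (W q ℓ n i a k ∩ W q ℓ n j b k).card = gJ q ℓ i j (a = b) (k : ℕ) := by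
  unfold W gJ
  split_ifs <;>
    simp_all [singleton_inter_compl, Finset.card_compl, Fintype.card_fin] <;>
    omega

lemma count_single {q ℓ n : ℕ} (hq : 1 ≤ q) (hℓ : 1 ≤ ℓ) {i : ℕ} (hin : i + ℓ ≤ n) :
    (Finset.univ.filter fun x : Fin n → Fin q => runStart q ℓ n x i).card
      = if i = 0 then q ^ (n - ℓ + 1) else (q - 1) * q ^ (n - ℓ) := by
  have hi : i < n := by omega
  rw [card_filter_fiber _ ⟨i, hi⟩]
  have hfib : ∀ a : Fin q,
      (Finset.univ.filter fun x : Fin n → Fin q => runStart q ℓ n x i ∧ x ⟨i, hi⟩ = a).card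
        = ∏ k ∈ Finset.range n, gS q ℓ i k := by
    intro a
    rw [card_filter_pointwise _ _ (runStart_iff hℓ hin hi a)]
    calc ∏ k : Fin n, (W q ℓ n i a k).card = ∏ k : Fin n, gS q ℓ i (k : ℕ) :=
          Finset.prod_congr rfl fun k _ => card_W i a k
      _ = ∏ k ∈ Finset.range n, gS q ℓ i k := Fin.prod_univ_eq_prod_range _ n
  rw [Finset.sum_congr rfl fun a _ => hfib a, Finset.sum_const, Finset.card_univ,
    Fintype.card_fin, smul_eq_mul]
  by_cases h0 : i = 0
  · subst h0
    rw [if_pos rfl, Finset.range_eq_Ico, split_prod _ 0 ℓ n (by omega) (by omega),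
      prod_Ico_const _ 1 0 ℓ (fun k h1 h2 => by unfold gS; rw [if_pos (by omega)]),
      prod_Ico_const _ q ℓ n (fun k h1 h2 => by
        unfold gS; rw [if_neg (by omega), if_neg (by omega)])]
    rw [one_pow, one_mul, ← pow_succ']
  · rw [if_neg h0, Finset.range_eq_Ico,
      split_prod _ 0 (i + ℓ) n (by omega) (by omega),
      split_prod _ 0 i (i + ℓ) (by omega) (by omega),
      split_prod _ 0 (i - 1) i (by omega) (by omega),
      prod_Ico_const _ q 0 (i - 1) (fun k h1 h2 => by
        unfold gS; rw [if_neg (by omega), if_neg (by omega)]),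
      prod_Ico_const _ (q - 1) (i - 1) i (fun k h1 h2 => by
        unfold gS; rw [if_neg (by omega), if_pos (by omega)]),
      prod_Ico_const _ 1 i (i + ℓ) (fun k h1 h2 => by
        unfold gS; rw [if_pos (by omega)]),
      prod_Ico_const _ q (i + ℓ) n (fun k h1 h2 => by
        unfold gS; rw [if_neg (by omega), if_neg (by omega)])]
    have h1 : i - (i - 1) = 1 := by omega
    rw [h1, one_pow, pow_one]
    have : q * (q ^ (i - 1 - 0) * (q - 1) * 1 * q ^ (n - (i + ℓ)))
        = (q - 1) * (q ^ (1 + (i - 1 - 0) + (n - (i + ℓ)))) := by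
      rw [pow_add, pow_add, pow_one]; ring
    rw [this]
    congr 2
    omega

lemma joint_iff {q ℓ n : ℕ} (hℓ : 1 ≤ ℓ) {i j : ℕ} (hin : i + ℓ ≤ n) (hjn : j + ℓ ≤ n)
    (hi : i < n) (hj : j < n) (a b : Fin q) (x : Fin n → Fin q) :
    (((runStart q ℓ n x i ∧ runStart q ℓ n x j) ∧ x ⟨i, hi⟩ = a) ∧ x ⟨j, hj⟩ = b)
      ↔ ∀ k, x k ∈ W q ℓ n i a k ∩ W q ℓ n j b k := by
  have h1 := runStart_iff hℓ hin hi a x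
  have h2 := runStart_iff hℓ hjn hj b x
  simp only [Finset.mem_inter, forall_and]
  tauto

lemma count_joint {q ℓ n : ℕ} (hq : 1 ≤ q) (hℓ : 1 ≤ ℓ) {i j : ℕ} (hij : i + ℓ ≤ j)
    (hjn : j + ℓ ≤ n) :
    (Finset.univ.filter fun x : Fin n → Fin q => runStart q ℓ n x i ∧ runStart q ℓ n x j).card
      = if i = 0 then (q - 1) * q ^ (n - 2*ℓ + 1) else (q - 1)^2 * q ^ (n - 2*ℓ) := by
  have hin : i + ℓ ≤ n := by omega
  have hi : i < n := by omega
  have hj : j < n := by omega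
  rw [card_filter_fiber _ ⟨i, hi⟩]
  rw [Finset.sum_congr rfl fun a _ => card_filter_fiber _ ⟨j, hj⟩]
  have hfib : ∀ a b : Fin q,
      (Finset.univ.filter fun x : Fin n → Fin q =>
          ((runStart q ℓ n x i ∧ runStart q ℓ n x j) ∧ x ⟨i, hi⟩ = a) ∧ x ⟨j, hj⟩ = b).card
        = ∏ k ∈ Finset.range n, gJ q ℓ i j (a = b) k := by
    intro a b
    rw [card_filter_pointwise _ _ (joint_iff hℓ hin hjn hi hj a b)]
    calc ∏ k : Fin n, (W q ℓ n i a k ∩ W q ℓ n j b k).card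
        = ∏ k : Fin n, gJ q ℓ i j (a = b) (k : ℕ) :=
          Finset.prod_congr rfl fun k _ => card_WW hℓ hij a b k
      _ = ∏ k ∈ Finset.range n, gJ q ℓ i j (a = b) k := Fin.prod_univ_eq_prod_range _ n
  rw [Finset.sum_congr rfl fun a _ => Finset.sum_congr rfl fun b _ => hfib a b]
  by_cases hb : j = i + ℓ
  · -- boundary case j = i + ℓ
    subst hb
    have hprod : ∀ (e : Prop) (he : Decidable e),
        ∏ k ∈ Finset.range n, @gJ q ℓ i (i + ℓ) e he k
        = (if e then 0 else 1) *
            ((q - 1) ^ (i - (i - 1)) * (q ^ (i - 1 - 0) * q ^ (n - (i + ℓ + ℓ)))) := by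
      intro e he
      rw [Finset.range_eq_Ico,
        split_prod _ 0 (i + ℓ + ℓ) n (by omega) (by omega),
        split_prod _ 0 (i + ℓ) (i + ℓ + ℓ) (by omega) (by omega),
        split_prod _ 0 (i + ℓ - 1) (i + ℓ) (by omega) (by omega),
        split_prod _ 0 i (i + ℓ - 1) (by omega) (by omega),
        split_prod _ 0 (i - 1) i (by omega) (by omega),
        prod_Ico_const _ q 0 (i - 1) (fun k h1 h2 => by
          unfold gJ
          rw [if_neg (by omega), if_neg (by omega), if_neg (by omega), if_neg (by omega)]),
        prod_Ico_const _ (q - 1) (i - 1) i (fun k h1 h2 => by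
          unfold gJ
          rw [if_neg (by omega), if_neg (by omega), if_pos (by omega)]),
        prod_Ico_const _ 1 i (i + ℓ - 1) (fun k h1 h2 => by
          unfold gJ; rw [if_pos (by omega), if_neg (by omega)]),
        prod_Ico_const _ (if e then 0 else 1) (i + ℓ - 1) (i + ℓ) (fun k h1 h2 => by
          unfold gJ; rw [if_pos (by omega), if_pos (by omega)]),
        prod_Ico_const _ 1 (i + ℓ) (i + ℓ + ℓ) (fun k h1 h2 => by
          unfold gJ; rw [if_neg (by omega), if_pos (by omega)]),
        prod_Ico_const _ q (i + ℓ + ℓ) n (fun k h1 h2 => by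
          unfold gJ
          rw [if_neg (by omega), if_neg (by omega), if_neg (by omega), if_neg (by omega)])]
      rw [show i + ℓ - (i + ℓ - 1) = 1 by omega, pow_one, one_pow, one_pow]
      ring
    rw [Finset.sum_congr rfl fun a _ => Finset.sum_congr rfl fun b _ => hprod (a = b) _]
    have hsum : ∀ a : Fin q, ∑ b : Fin q,
        (if a = b then 0 else 1) *
          ((q - 1) ^ (i - (i - 1)) * (q ^ (i - 1 - 0) * q ^ (n - (i + ℓ + ℓ))))
        = (q - 1) * ((q - 1) ^ (i - (i - 1)) * (q ^ (i - 1 - 0) * q ^ (n - (i + ℓ + ℓ)))) := by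
      intro a
      rw [Finset.sum_congr rfl fun b _ => by rw [ite_mul, zero_mul, one_mul]]
      exact sum_ite_ne a _
    rw [Finset.sum_congr rfl fun a _ => hsum a, Finset.sum_const, Finset.card_univ,
      Fintype.card_fin, smul_eq_mul]
    by_cases h0 : i = 0
    · subst h0
      rw [if_pos rfl]
      simp only [Nat.sub_self, pow_zero, Nat.zero_sub, Nat.sub_zero, one_mul]
      rw [show n - (0 + ℓ + ℓ) = n - 2 * ℓ from by omega, pow_succ]
      ring
    · rw [if_neg h0, show i - (i - 1) = 1 by omega, pow_one,
        show i - 1 - 0 = i - 1 by omega, ← pow_add]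
      rw [show n - 2 * ℓ = (i - 1 + (n - (i + ℓ + ℓ))) + 1 from by omega, pow_succ]
      ring
  · -- separated case j > i + ℓ
    have hb' : i + ℓ < j := by omega
    have hprod : ∀ (e : Prop) (he : Decidable e),
        ∏ k ∈ Finset.range n, @gJ q ℓ i j e he k
        = (q - 1) ^ (i - (i - 1)) * ((q - 1) *
            (q ^ (i - 1 - 0) * (q ^ (j - 1 - (i + ℓ)) * q ^ (n - (j + ℓ))))) := by
      intro e he
      rw [Finset.range_eq_Ico,
        split_prod _ 0 (j + ℓ) n (by omega) (by omega),
        split_prod _ 0 j (j + ℓ) (by omega) (by omega),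
        split_prod _ 0 (j - 1) j (by omega) (by omega),
        split_prod _ 0 (i + ℓ) (j - 1) (by omega) (by omega),
        split_prod _ 0 i (i + ℓ) (by omega) (by omega),
        split_prod _ 0 (i - 1) i (by omega) (by omega),
        prod_Ico_const _ q 0 (i - 1) (fun k h1 h2 => by
          unfold gJ
          rw [if_neg (by omega), if_neg (by omega), if_neg (by omega), if_neg (by omega)]),
        prod_Ico_const _ (q - 1) (i - 1) i (fun k h1 h2 => by
          unfold gJ
          rw [if_neg (by omega), if_neg (by omega), if_pos (by omega)]),
        prod_Ico_const _ 1 i (i + ℓ) (fun k h1 h2 => by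
          unfold gJ; rw [if_pos (by omega), if_neg (by omega)]),
        prod_Ico_const _ q (i + ℓ) (j - 1) (fun k h1 h2 => by
          unfold gJ
          rw [if_neg (by omega), if_neg (by omega), if_neg (by omega), if_neg (by omega)]),
        prod_Ico_const _ (q - 1) (j - 1) j (fun k h1 h2 => by
          unfold gJ
          rw [if_neg (by omega), if_neg (by omega), if_neg (by omega), if_pos (by omega)]),
        prod_Ico_const _ 1 j (j + ℓ) (fun k h1 h2 => by
          unfold gJ; rw [if_neg (by omega), if_pos (by omega)]),
        prod_Ico_const _ q (j + ℓ) n (fun k h1 h2 => by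
          unfold gJ
          rw [if_neg (by omega), if_neg (by omega), if_neg (by omega), if_neg (by omega)])]
      rw [show j - (j - 1) = 1 by omega, pow_one, one_pow, one_pow]
      ring
    rw [Finset.sum_congr rfl fun a _ => Finset.sum_congr rfl fun b _ => hprod (a = b) _]
    rw [Finset.sum_const, Finset.sum_const, Finset.card_univ, Fintype.card_fin,
      smul_eq_mul, smul_eq_mul]
    by_cases h0 : i = 0
    · subst h0
      rw [if_pos rfl]
      simp only [Nat.sub_self, pow_zero, Nat.zero_sub, Nat.sub_zero, one_mul]
      rw [← pow_add,
        show n - 2 * ℓ + 1 = (j - 1 - (0 + ℓ) + (n - (j + ℓ))) + 2 from by omega, pow_add]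
      ring
    · rw [if_neg h0, show i - (i - 1) = 1 by omega, pow_one,
        show i - 1 - 0 = i - 1 by omega, ← pow_add, ← pow_add]
      rw [show n - 2 * ℓ = (i - 1 + (j - 1 - (i + ℓ) + (n - (j + ℓ)))) + 2 from by omega,
        pow_add]
      ring

lemma indep_main {q ℓ n : ℕ} (hq : 2 ≤ q) (hℓ : 2 ≤ ℓ) (hn : 2 * ℓ ≤ n)
    {i j : ℕ} (hij : i + ℓ ≤ j) (hjn : j + ℓ ≤ n) :
    ((Finset.univ.filter
        (fun x : Fin n → Fin q => runStart q ℓ n x i ∧ runStart q ℓ n x j)).card : ℚ) / (q : ℚ) ^ n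
      = (((Finset.univ.filter (fun x : Fin n → Fin q => runStart q ℓ n x i)).card : ℚ) / (q : ℚ) ^ n)
        * (((Finset.univ.filter (fun x : Fin n → Fin q => runStart q ℓ n x j)).card : ℚ) / (q : ℚ) ^ n) := by
  have hq1 : 1 ≤ q := by omega
  have hℓ1 : 1 ≤ ℓ := by omega
  have hin : i + ℓ ≤ n := by omega
  have hj0 : j ≠ 0 := by omega
  have hB : (q : ℚ) ≠ 0 := by positivity
  rw [count_joint hq1 hℓ1 hij hjn, count_single hq1 hℓ1 hin, count_single hq1 hℓ1 hjn,
    if_neg hj0]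
  have key : ∀ (A B : ℚ) (e1 e2 e3 : ℕ), e1 + n + n = e2 + e3 + n →
      A * B ^ e1 * (B ^ n * B ^ n) = B ^ e2 * (A * B ^ e3) * B ^ n := by
    intro A B e1 e2 e3 h
    calc A * B ^ e1 * (B ^ n * B ^ n) = A * B ^ (e1 + n + n) := by
          rw [pow_add, pow_add]; ring
      _ = A * B ^ (e2 + e3 + n) := by rw [h]
      _ = B ^ e2 * (A * B ^ e3) * B ^ n := by rw [pow_add, pow_add]; ring
  have key2 : ∀ (A B : ℚ) (e1 e2 e3 : ℕ), e1 + n + n = e2 + e3 + n →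
      A ^ 2 * B ^ e1 * (B ^ n * B ^ n) = A * B ^ e2 * (A * B ^ e3) * B ^ n := by
    intro A B e1 e2 e3 h
    calc A ^ 2 * B ^ e1 * (B ^ n * B ^ n) = A ^ 2 * B ^ (e1 + n + n) := by
          rw [pow_add, pow_add]; ring
      _ = A ^ 2 * B ^ (e2 + e3 + n) := by rw [h]
      _ = A * B ^ e2 * (A * B ^ e3) * B ^ n := by rw [pow_add, pow_add]; ring
  by_cases h0 : i = 0
  · rw [if_pos h0, if_pos h0]
    push_cast [Nat.cast_mul, Nat.cast_pow]
    rw [div_mul_div_comm, div_eq_div_iff (by positivity) (by positivity)]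
    exact key _ _ _ _ _ (by omega)
  · rw [if_neg h0, if_neg h0]
    push_cast [Nat.cast_mul, Nat.cast_pow]
    rw [div_mul_div_comm, div_eq_div_iff (by positivity) (by positivity)]
    exact key2 _ _ _ _ _ (by omega)

theorem stmt_11 (q ℓ n : ℕ) (hq : 2 ≤ q) (hℓ : 2 ≤ ℓ) (hn : 2 * ℓ ≤ n)
    (i j : ℕ) (hi : i ≤ n - ℓ) (hj : j ≤ n - ℓ)
    (hfar : i + ℓ ≤ j ∨ j + ℓ ≤ i) :
    ((Finset.univ.filter
        (fun x : Fin n → Fin q => runStart q ℓ n x i ∧ runStart q ℓ n x j)).card : ℚ) / (q : ℚ) ^ n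
      = (((Finset.univ.filter (fun x : Fin n → Fin q => runStart q ℓ n x i)).card : ℚ) / (q : ℚ) ^ n)
        * (((Finset.univ.filter (fun x : Fin n → Fin q => runStart q ℓ n x j)).card : ℚ) / (q : ℚ) ^ n) := by
  rcases hfar with h | h
  · exact indep_main hq hℓ hn h (by omega)
  · rw [show (Finset.univ.filter
        (fun x : Fin n → Fin q => runStart q ℓ n x i ∧ runStart q ℓ n x j))
      = (Finset.univ.filter
        (fun x : Fin n → Fin q => runStart q ℓ n x j ∧ runStart q ℓ n x i)) from
      Finset.filter_congr fun x _ => by rw [and_comm]]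
    rw [indep_main hq hℓ hn h (by omega), mul_comm]
end

section
/- Let x ∈ Σ_q^n be a string containing at least κ ≥ t disjoint maximal constant substrings each of length at least ℓ ≥ t + 1. Then the number of distinct strings of length n - t obtainable from x by deleting exactly t symbols, each deletion occurring inside some maximal constant substring of length at least ℓ, is at least binom(κ, t). -/
open scoped Classical

/-- `MaxRun q n x a b`: positions `a, …, b` form a maximal constant run of the
string `(x 0, …, x (n-1))`. -/
def MaxRun (q n : ℕ) (x : ℕ → Fin q) (a b : ℕ) : Prop :=
  a ≤ b ∧ b < n ∧ (∀ i, a ≤ i → i ≤ b → x i = x a) ∧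
    (a = 0 ∨ x (a - 1) ≠ x a) ∧ (b = n - 1 ∨ x (b + 1) ≠ x b)

/-- Strings of length `n - t` obtained from `(x 0, …, x (n-1))` by deleting exactly
`t` symbols, each deleted symbol lying inside some maximal constant run of length
at least `ℓ`. -/
def DelOutputs (q n t ℓ : ℕ) (x : ℕ → Fin q) : Set (Fin (n - t) → Fin q) :=
  {y | ∃ f : Fin (n - t) → ℕ, StrictMono f ∧ (∀ i, f i < n) ∧ (∀ i, y i = x (f i)) ∧
    ∀ m < n, (∀ i, f i ≠ m) →
      ∃ a b, MaxRun q n x a b ∧ ℓ ≤ b + 1 - a ∧ a ≤ m ∧ m ≤ b}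

/-- The index of the `i`-th element of `C` counts the elements of `C` below it. -/
lemma idxA (C : Finset ℕ) (k : ℕ) (h : C.card = k) (i : Fin k) :
    (C.filter (fun z => z < (C.orderIsoOfFin h i : ℕ))).card = i := by
  set e := C.orderIsoOfFin h with he
  have himg : C.filter (fun z => z < (e i : ℕ)) =
      (Finset.Iio i).image (fun j : Fin k => (e j : ℕ)) := by
    ext z
    simp only [Finset.mem_filter, Finset.mem_image, Finset.mem_Iio]
    constructor
    · rintro ⟨hzC, hzlt⟩
      refine ⟨e.symm ⟨z, hzC⟩, ?_, by simp⟩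
      have : e (e.symm ⟨z, hzC⟩) < e i := by
        rw [e.apply_symm_apply]
        exact Subtype.mk_lt_mk.mpr hzlt
      exact e.lt_iff_lt.mp this
    · rintro ⟨j, hj, rfl⟩
      exact ⟨(e j).2, Subtype.coe_lt_coe.mpr (e.lt_iff_lt.mpr hj)⟩
  rw [himg, Finset.card_image_of_injective _ (fun a b hab => e.injective (Subtype.ext hab)),
    Fin.card_Iio]

/-- Conversely, an element of `C` with exactly `i` elements of `C` below it is the
`i`-th element of `C`. -/
lemma idxB (C : Finset ℕ) (k : ℕ) (h : C.card = k) (i : Fin k) (c : ℕ) (hc : c ∈ C)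
    (hcard : (C.filter (fun z => z < c)).card = i) :
    (C.orderIsoOfFin h i : ℕ) = c := by
  set e := C.orderIsoOfFin h with he
  have h1 := idxA C k h (e.symm ⟨c, hc⟩)
  rw [e.apply_symm_apply] at h1
  simp only at h1
  have : (e.symm ⟨c, hc⟩ : Fin k) = i := Fin.ext (by omega)
  rw [← this, e.apply_symm_apply]

lemma cnt (S : Finset ℕ) (n c : ℕ) (hc : c ≤ n) :
    ((Finset.range n \ S).filter (fun z => z < c)).card = c - (S.filter (fun z => z < c)).card := by
  have h1 : (Finset.range n \ S).filter (fun z => z < c)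
      = Finset.range c \ (S.filter (fun z => z < c)) := by
    ext z
    simp only [Finset.mem_filter, Finset.mem_sdiff, Finset.mem_range]
    constructor
    · rintro ⟨⟨h2, h3⟩, h4⟩; exact ⟨h4, fun h5 => h3 h5.1⟩
    · rintro ⟨h2, h3⟩; exact ⟨⟨lt_of_lt_of_le h2 hc, fun h4 => h3 ⟨h4, h2⟩⟩, h2⟩
  rw [h1, Finset.card_sdiff_of_subset ?_, Finset.card_range]
  intro z hz
  simp only [Finset.mem_filter] at hz
  exact Finset.mem_range.mpr hz.2

/-- Key injectivity lemma: deleting distinct sets of run-starts gives distinct strings. -/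
lemma key (q n t ℓ : ℕ) (x : ℕ → Fin q) (ht : 1 ≤ t) (hℓ : t + 1 ≤ ℓ)
    (K S S' : Finset ℕ)
    (HK : ∀ a ∈ K, a < n ∧ ∃ b, MaxRun q n x a b ∧ ℓ ≤ b + 1 - a)
    (hS : S ⊆ K) (hS' : S' ⊆ K) (hcS : S.card = t) (hcS' : S'.card = t)
    (m : ℕ) (hmS : m ∈ S) (hmS' : m ∉ S')
    (hmin : ∀ z, z < m → (z ∈ S ↔ z ∈ S'))
    (hC : (Finset.range n \ S).card = n - t) (hC' : (Finset.range n \ S').card = n - t) :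
    ∃ j : Fin (n - t), x ((Finset.range n \ S).orderIsoOfFin hC j : ℕ) ≠
      x ((Finset.range n \ S').orderIsoOfFin hC' j : ℕ) := by
  obtain ⟨hmn, b, hrun, hlen⟩ := HK m (hS hmS)
  obtain ⟨hab, hbn, hconst, hleft, hright⟩ := hrun
  -- no element of K strictly inside the run (m, b]
  have noK : ∀ z, m < z → z ≤ b → z ∉ K := by
    intro z h1 h2 hzK
    obtain ⟨_, b2, ⟨_, _, _, hleft2, _⟩, _⟩ := HK z hzK
    rcases hleft2 with h0 | hne
    · omega
    · apply hne
      rw [hconst (z - 1) (by omega) (by omega), hconst z (by omega) h2]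
  -- the case b = n - 1 is impossible
  have hbne : b ≠ n - 1 := by
    intro hb
    have hsub : S' ⊆ S := by
      intro z hz
      rcases lt_trichotomy z m with h1 | h1 | h1
      · exact (hmin z h1).mpr hz
      · exact absurd (h1 ▸ hz) hmS'
      · have hzn := (HK z (hS' hz)).1
        exact absurd (hS' hz) (noK z h1 (by omega))
    have : S' = S := Finset.eq_of_subset_of_card_le hsub (by omega)
    exact hmS' (this ▸ hmS)
  have hxb1 : x (b + 1) ≠ x b := hright.resolve_left hbne
  have hb1n : b + 1 < n := by omega
  set d := (S.filter (fun z => z < m)).card with hd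
  have hfilter_eq : S'.filter (fun z => z < m) = S.filter (fun z => z < m) := by
    ext z
    simp only [Finset.mem_filter]
    exact ⟨fun ⟨h1, h2⟩ => ⟨(hmin z h2).mpr h1, h2⟩, fun ⟨h1, h2⟩ => ⟨(hmin z h2).mp h1, h2⟩⟩
  -- b ∉ S'
  have hbS' : b ∉ S' := by
    intro h
    rcases eq_or_lt_of_le hab with h1 | h1
    · exact hmS' (h1 ▸ h)
    · exact noK b h1 le_rfl (hS' h)
  -- index of b in range n \ S' is b - d
  have hfS' : (S'.filter (fun z => z < b)).card = d := by
    have h2 : S'.filter (fun z => z < b) = S'.filter (fun z => z < m) := by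
      ext z
      simp only [Finset.mem_filter]
      constructor
      · rintro ⟨h1, h2⟩
        refine ⟨h1, ?_⟩
        rcases lt_trichotomy z m with h3 | h3 | h3
        · exact h3
        · exact absurd (h3 ▸ h1) hmS'
        · exact absurd (hS' h1) (noK z h3 (by omega))
      · rintro ⟨h1, h2⟩; exact ⟨h1, by omega⟩
    rw [h2, hfilter_eq]
  have hidxb : ((Finset.range n \ S').filter (fun z => z < b)).card = b - d := by
    rw [cnt S' n b (by omega), hfS']
  have hbC' : b ∈ Finset.range n \ S' := by
    simp only [Finset.mem_sdiff, Finset.mem_range]; exact ⟨hbn, hbS'⟩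
  have hjlt : b - d < n - t := by
    have hsub : (Finset.range n \ S').filter (fun z => z < b) ⊂ Finset.range n \ S' := by
      refine Finset.ssubset_iff_of_subset (Finset.filter_subset _ _) |>.mpr ?_
      exact ⟨b, hbC', by simp⟩
    have := Finset.card_lt_card hsub
    omega
  set j : Fin (n - t) := ⟨b - d, hjlt⟩ with hj
  have heS' : ((Finset.range n \ S').orderIsoOfFin hC' j : ℕ) = b :=
    idxB _ _ hC' j b hbC' hidxb
  have hSm : S.filter (fun z => z < b + 1) = insert m (S.filter (fun z => z < m)) := by
    ext z
    simp only [Finset.mem_filter, Finset.mem_insert]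
    constructor
    · rintro ⟨h1, h2⟩
      rcases lt_trichotomy z m with h3 | h3 | h3
      · exact Or.inr ⟨h1, h3⟩
      · exact Or.inl h3
      · exact absurd (hS h1) (noK z h3 (by omega))
    · rintro (rfl | ⟨h1, h2⟩)
      · exact ⟨hmS, by omega⟩
      · exact ⟨h1, by omega⟩
  have hSmcard : (S.filter (fun z => z < b + 1)).card = d + 1 := by
    rw [hSm, Finset.card_insert_of_notMem (by simp)]
  refine ⟨j, ?_⟩
  rw [heS']
  by_cases hb1 : b + 1 ∈ S
  · -- deleted b+1 as well; next survivor is b+2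
    obtain ⟨hb1n', b2, ⟨hab2, hb2n, hconst2, _, _⟩, hlen2⟩ := HK (b + 1) (hS hb1)
    have hb2ge : b + 2 ≤ b2 := by omega
    have hx2 : x (b + 2) = x (b + 1) := hconst2 (b + 2) (by omega) hb2ge
    have hb2S : b + 2 ∉ S := by
      intro h
      obtain ⟨_, b3, ⟨_, _, _, hleft3, _⟩, _⟩ := HK (b + 2) (hS h)
      rcases hleft3 with h0 | hne
      · omega
      · exact hne (by simpa using hx2.symm)
    have hb2C : b + 2 ∈ Finset.range n \ S := by
      simp only [Finset.mem_sdiff, Finset.mem_range]; exact ⟨by omega, hb2S⟩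
    have hScard2 : (S.filter (fun z => z < b + 2)).card = d + 2 := by
      have : S.filter (fun z => z < b + 2) = insert (b + 1) (S.filter (fun z => z < b + 1)) := by
        ext z
        simp only [Finset.mem_filter, Finset.mem_insert]
        constructor
        · rintro ⟨h1, h2⟩
          rcases Nat.lt_or_ge z (b + 1) with h3 | h3
          · exact Or.inr ⟨h1, h3⟩
          · exact Or.inl (by omega)
        · rintro (rfl | ⟨h1, h2⟩)
          · exact ⟨hb1, by omega⟩
          · exact ⟨h1, by omega⟩
      rw [this, Finset.card_insert_of_notMem (by simp), hSmcard]
    have hidx2 : ((Finset.range n \ S).filter (fun z => z < b + 2)).card = b - d := by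
      rw [cnt S n (b + 2) (by omega), hScard2]; omega
    have heS : ((Finset.range n \ S).orderIsoOfFin hC j : ℕ) = b + 2 :=
      idxB _ _ hC j (b + 2) hb2C (by rw [hidx2])
    rw [heS, hx2]
    exact hxb1
  · have hb1C : b + 1 ∈ Finset.range n \ S := by
      simp only [Finset.mem_sdiff, Finset.mem_range]; exact ⟨hb1n, hb1⟩
    have hidx1 : ((Finset.range n \ S).filter (fun z => z < b + 1)).card = b - d := by
      rw [cnt S n (b + 1) (by omega), hSmcard]; omega
    have heS : ((Finset.range n \ S).orderIsoOfFin hC j : ℕ) = b + 1 :=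
      idxB _ _ hC j (b + 1) hb1C (by rw [hidx1])
    rw [heS]
    exact hxb1

theorem stmt_14 (q n t κ ℓ : ℕ) (x : ℕ → Fin q)
    (ht : 1 ≤ t) (hκ : t ≤ κ) (hℓ : t + 1 ≤ ℓ) (htn : t ≤ n)
    (hruns : κ ≤ ((Finset.range n).filter
      (fun a => ∃ b, MaxRun q n x a b ∧ ℓ ≤ b + 1 - a)).card) :
    Nat.choose κ t ≤
      (Finset.univ.filter (fun y : Fin (n - t) → Fin q => y ∈ DelOutputs q n t ℓ x)).card := by
  classical
  set R := (Finset.range n).filter (fun a => ∃ b, MaxRun q n x a b ∧ ℓ ≤ b + 1 - a) with hR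
  obtain ⟨K, hKR, hKcard⟩ := Finset.exists_subset_card_eq hruns
  have HK : ∀ a ∈ K, a < n ∧ ∃ b, MaxRun q n x a b ∧ ℓ ≤ b + 1 - a := by
    intro a ha
    have := hKR ha
    rw [hR, Finset.mem_filter, Finset.mem_range] at this
    exact this
  -- card of the complement for a t-subset of K
  have hCc : ∀ S : Finset ℕ, S ⊆ K → S.card = t → (Finset.range n \ S).card = n - t := by
    intro S hSK hcS
    have hsub : S ⊆ Finset.range n := fun z hz => Finset.mem_range.mpr (HK z (hSK hz)).1
    rw [Finset.card_sdiff_of_subset hsub, Finset.card_range, hcS]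
  set F : Finset ℕ → (Fin (n - t) → Fin q) := fun S =>
    if h : (Finset.range n \ S).card = n - t then
      (fun i => x ((Finset.range n \ S).orderIsoOfFin h i : ℕ))
    else (fun _ => x 0) with hF
  have hFdef : ∀ (S : Finset ℕ) (h : (Finset.range n \ S).card = n - t),
      F S = fun i => x ((Finset.range n \ S).orderIsoOfFin h i : ℕ) := by
    intro S h
    simp only [hF, dif_pos h]
  have hmap : ∀ S ∈ K.powersetCard t,
      F S ∈ Finset.univ.filter (fun y : Fin (n - t) → Fin q => y ∈ DelOutputs q n t ℓ x) := by
    intro S hSmem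
    rw [Finset.mem_powersetCard] at hSmem
    obtain ⟨hSK, hcS⟩ := hSmem
    have hC := hCc S hSK hcS
    rw [Finset.mem_filter]
    refine ⟨Finset.mem_univ _, ?_⟩
    rw [hFdef S hC]
    refine ⟨fun i => ((Finset.range n \ S).orderIsoOfFin hC i : ℕ), ?_, ?_, fun i => rfl, ?_⟩
    · intro i j hij
      exact Subtype.coe_lt_coe.mpr (((Finset.range n \ S).orderIsoOfFin hC).strictMono hij)
    · intro i
      have := ((Finset.range n \ S).orderIsoOfFin hC i).2
      rw [Finset.mem_sdiff, Finset.mem_range] at this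
      exact this.1
    · intro m hm hnot
      have hmS : m ∈ S := by
        by_contra hmS
        have hmC : m ∈ Finset.range n \ S := by
          rw [Finset.mem_sdiff, Finset.mem_range]; exact ⟨hm, hmS⟩
        exact hnot (((Finset.range n \ S).orderIsoOfFin hC).symm ⟨m, hmC⟩)
          (by simp only []; rw [OrderIso.apply_symm_apply])
      obtain ⟨_, b, hrun, hlen⟩ := HK m (hSK hmS)
      exact ⟨m, b, hrun, hlen, le_rfl, hrun.1⟩
  have hinj : Set.InjOn F (K.powersetCard t : Finset (Finset ℕ)) := by
    intro S hSmem S' hS'mem hFeq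
    rw [Finset.mem_coe, Finset.mem_powersetCard] at hSmem hS'mem
    obtain ⟨hSK, hcS⟩ := hSmem
    obtain ⟨hS'K, hcS'⟩ := hS'mem
    have hC := hCc S hSK hcS
    have hC' := hCc S' hS'K hcS'
    by_contra hne
    set T := (S \ S') ∪ (S' \ S) with hT
    have hTne : T.Nonempty := by
      rw [Finset.nonempty_iff_ne_empty]
      intro h
      apply hne
      rw [hT, Finset.union_eq_empty] at h
      exact Finset.Subset.antisymm (Finset.sdiff_eq_empty_iff_subset.mp h.1)
        (Finset.sdiff_eq_empty_iff_subset.mp h.2)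
    set m := T.min' hTne with hm
    have hmmem := T.min'_mem hTne
    have hminle : ∀ z ∈ T, m ≤ z := fun z hz => T.min'_le z hz
    have hminiff : ∀ z, z < m → (z ∈ S ↔ z ∈ S') := by
      intro z hz
      constructor
      · intro h1
        by_contra h2
        exact absurd (hminle z (Finset.mem_union_left _ (Finset.mem_sdiff.mpr ⟨h1, h2⟩)))
          (by omega)
      · intro h1
        by_contra h2
        exact absurd (hminle z (Finset.mem_union_right _ (Finset.mem_sdiff.mpr ⟨h1, h2⟩)))
          (by omega)
    have hmmem2 : m ∈ S \ S' ∪ S' \ S := hmmem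
    rw [Finset.mem_union, Finset.mem_sdiff, Finset.mem_sdiff] at hmmem2
    rcases hmmem2 with ⟨h1, h2⟩ | ⟨h1, h2⟩
    · obtain ⟨j, hj⟩ := key q n t ℓ x ht hℓ K S S' HK hSK hS'K hcS hcS' m h1 h2 hminiff hC hC'
      apply hj
      have := congrFun hFeq j
      rw [hFdef S hC, hFdef S' hC'] at this
      exact this
    · obtain ⟨j, hj⟩ := key q n t ℓ x ht hℓ K S' S HK hS'K hSK hcS' hcS m h1 h2
        (fun z hz => (hminiff z hz).symm) hC' hC
      apply hj
      have := congrFun hFeq j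
      rw [hFdef S hC, hFdef S' hC'] at this
      exact this.symm
  have hle := Finset.card_le_card_of_injOn F hmap hinj
  rwa [Finset.card_powersetCard, hKcard] at hle
end
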